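/- In the canonical stable amalgam NF_fin(G₀,G₁,G₂,G₃) of finite groups, the factors intersect in the base: G₁ ∩ G₂ = G₀ (computed inside G₃). -/

import Mathlib

universe u

/-- A group is locally finite if every finitely generated subgroup is finite. -/
def IsLocallyFiniteGroup (G : Type*) [Group G] : Prop :=
  ∀ s : Finset G, (Subgroup.closure (s : Set G) : Set G).Finite

/-- An amalgamation try over `G₀ ⊆ H₁`, `G₀ ⊆ H₂` (given by the embeddings
`κ₁`, `κ₂`): a choice of left coset representative sets `I₁ ⊆ H₁`, `I₂ ⊆ H₂`
of `G₀`, both containing the identity. -/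
structure AmalgTry (G₀ H₁ H₂ : Type u) [Group G₀] [Group H₁] [Group H₂]
    (κ₁ : G₀ →* H₁) (κ₂ : G₀ →* H₂) where
  I₁ : Set H₁
  I₂ : Set H₂
  one₁ : (1 : H₁) ∈ I₁
  one₂ : (1 : H₂) ∈ I₂
  rep₁ : ∀ g : H₁, ∃! r, r ∈ I₁ ∧ ∃ h : G₀, g = r * κ₁ h
  rep₂ : ∀ g : H₂, ∃! r, r ∈ I₂ ∧ ∃ h : G₀, g = r * κ₂ h

namespace AmalgTry

variable {G₀ H₁ H₂ : Type u} [Group G₀] [Group H₁] [Group H₂]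
  {κ₁ : G₀ →* H₁} {κ₂ : G₀ →* H₂}

/-- The set of triples `(g₀, g₁, g₂)` with `g₀ ∈ G₀`, `g₁ ∈ I₁`, `g₂ ∈ I₂`. -/
abbrev U (x : AmalgTry G₀ H₁ H₂ κ₁ κ₂) : Type u :=
  {p : G₀ × H₁ × H₂ // p.2.1 ∈ x.I₁ ∧ p.2.2 ∈ x.I₂}

/-- The canonical action of `g ∈ H₁` on the triples: `(g₀,g₁,g₂) ↦ (g₀',g₁',g₂)`
where `g₁' * g₀' = g₁ * g₀ * g` is the unique coset decomposition. -/
noncomputable def j₁ (x : AmalgTry G₀ H₁ H₂ κ₁ κ₂) (g : H₁) (u : x.U) : x.U :=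
  ⟨⟨((x.rep₁ (u.val.2.1 * κ₁ u.val.1 * g)).exists.choose_spec.2).choose,
    (x.rep₁ (u.val.2.1 * κ₁ u.val.1 * g)).exists.choose,
    u.val.2.2⟩,
   ⟨(x.rep₁ (u.val.2.1 * κ₁ u.val.1 * g)).exists.choose_spec.1, u.prop.2⟩⟩

/-- The canonical action of `g ∈ H₂` on the triples: `(g₀,g₁,g₂) ↦ (g₀'',g₁,g₂'')`
where `g₂'' * g₀'' = g₂ * g₀ * g` is the unique coset decomposition. -/
noncomputable def j₂ (x : AmalgTry G₀ H₁ H₂ κ₁ κ₂) (g : H₂) (u : x.U) : x.U :=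
  ⟨⟨((x.rep₂ (u.val.2.2 * κ₂ u.val.1 * g)).exists.choose_spec.2).choose,
    u.val.2.1,
    (x.rep₂ (u.val.2.2 * κ₂ u.val.1 * g)).exists.choose⟩,
   ⟨u.prop.1, (x.rep₂ (u.val.2.2 * κ₂ u.val.1 * g)).exists.choose_spec.1⟩⟩

end AmalgTry

/-- `F : G₃ → (U → U)` is a compatible homomorphism for the try `x`: it is an
(anti)homomorphism to the permutations of the triples (composition read from
the left as in the paper) restricting to `j₁` on `G₁` and to `j₂` on `G₂`. -/
def CompatAt {G₀ G₁ G₂ G₃ H₁ H₂ : Type u}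
    [Group G₀] [Group G₁] [Group G₂] [Group G₃] [Group H₁] [Group H₂]
    (ι₁ : G₀ →* G₁) (ι₂ : G₀ →* G₂) (e₁ : G₁ →* G₃) (e₂ : G₂ →* G₃)
    (f₁ : G₁ →* H₁) (f₂ : G₂ →* H₂)
    (x : AmalgTry G₀ H₁ H₂ (f₁.comp ι₁) (f₂.comp ι₂))
    (F : G₃ → (x.U → x.U)) : Prop :=
  F 1 = id ∧ (∀ a b : G₃, F (a * b) = F b ∘ F a) ∧
  (∀ g : G₁, F (e₁ g) = x.j₁ (f₁ g)) ∧ (∀ g : G₂, F (e₂ g) = x.j₂ (f₂ g))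

/-- A witness that some amalgamation try separates `a ∈ G₃` from the identity. -/
structure SepWitness {G₀ G₁ G₂ G₃ : Type u}
    [Group G₀] [Group G₁] [Group G₂] [Group G₃]
    (ι₁ : G₀ →* G₁) (ι₂ : G₀ →* G₂) (e₁ : G₁ →* G₃) (e₂ : G₂ →* G₃)
    (a : G₃) : Type (u + 1) where
  H₁ : Type u
  H₂ : Type u
  [grp₁ : Group H₁]
  [grp₂ : Group H₂]
  f₁ : G₁ →* H₁
  f₂ : G₂ →* H₂
  inj₁ : Function.Injective f₁
  inj₂ : Function.Injective f₂
  lf₁ : IsLocallyFiniteGroup H₁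
  lf₂ : IsLocallyFiniteGroup H₂
  x : AmalgTry G₀ H₁ H₂ (f₁.comp ι₁) (f₂.comp ι₂)
  F : G₃ → (x.U → x.U)
  compat : CompatAt ι₁ ι₂ e₁ e₂ f₁ f₂ x F
  sep : F a ≠ id

/-- `NF_fin(G₀,G₁,G₂,G₃)`: the canonical stable amalgam of `G₁`, `G₂` over `G₀`
inside `G₃` (the subgroup inclusions are given by the injective homomorphisms
`ι₁`, `ι₂`, `e₁`, `e₂` with `e₁ ∘ ι₁ = e₂ ∘ ι₂`, and `G₃ = ⟨G₁ ∪ G₂⟩`):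
for every amalgamation try (over locally finite extensions of the factors)
there is a compatible homomorphism from `G₃`, and these jointly separate
the points of `G₃`. -/
def NFfin (G₀ G₁ G₂ G₃ : Type u) [Group G₀] [Group G₁] [Group G₂] [Group G₃]
    (ι₁ : G₀ →* G₁) (ι₂ : G₀ →* G₂) (e₁ : G₁ →* G₃) (e₂ : G₂ →* G₃) : Prop :=
  Function.Injective ι₁ ∧ Function.Injective ι₂ ∧
  Function.Injective e₁ ∧ Function.Injective e₂ ∧
  (∀ g : G₀, e₁ (ι₁ g) = e₂ (ι₂ g)) ∧
  Subgroup.closure (Set.range e₁ ∪ Set.range e₂) = (⊤ : Subgroup G₃) ∧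
  (∀ (H₁ H₂ : Type u) [Group H₁] [Group H₂] (f₁ : G₁ →* H₁) (f₂ : G₂ →* H₂),
    Function.Injective f₁ → Function.Injective f₂ →
    IsLocallyFiniteGroup H₁ → IsLocallyFiniteGroup H₂ →
    ∀ x : AmalgTry G₀ H₁ H₂ (f₁.comp ι₁) (f₂.comp ι₂),
      ∃ F : G₃ → (x.U → x.U), CompatAt ι₁ ι₂ e₁ e₂ f₁ f₂ x F) ∧
  (∀ a : G₃, a ≠ 1 → Nonempty (SepWitness ι₁ ι₂ e₁ e₂ a))

/-!
Take the trivial amalgamation try: `H₁ = G₁`, `H₂ = G₂` (finite, hence locally finite), with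
any coset representative sets containing `1`. A compatible `F` sends `e₁ x = e₂ y` to
`j₁ x = j₂ y`; evaluated at the base triple `(1, 1, 1)`, the `j₁` side keeps the third entry `1`
and the `j₂` side keeps the second entry `1`, so both coset representatives are trivial and
`x`, `y` are the images of the common first entry `g₀ ∈ G₀`.
-/

theorem IsLocallyFiniteGroup.of_finite (G : Type*) [Group G] [Finite G] :
    IsLocallyFiniteGroup G :=
  fun _ => Set.toFinite _

theorem Subgroup.IsComplement.existsUnique_mul_map {G₀ H : Type*} [Group G₀] [Group H]
    {κ : G₀ →* H} {S : Set H} (hS : Subgroup.IsComplement S (κ.range : Set H)) (g : H) :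
    ∃! r, r ∈ S ∧ ∃ h : G₀, g = r * κ h := by
  obtain ⟨s, ⟨h, hh⟩, huniq⟩ := Subgroup.isComplement_iff_existsUnique_inv_mul_mem.mp hS g
  refine ⟨s, ⟨s.2, h, by rw [hh, mul_inv_cancel_left]⟩, ?_⟩
  rintro r ⟨hrS, h', rfl⟩
  exact congrArg Subtype.val (huniq ⟨r, hrS⟩ ⟨h', by group⟩)

namespace AmalgTry

variable {G₀ H₁ H₂ : Type u} [Group G₀] [Group H₁] [Group H₂]

noncomputable def ofComplements (κ₁ : G₀ →* H₁) (κ₂ : G₀ →* H₂) : AmalgTry G₀ H₁ H₂ κ₁ κ₂ :=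
  let c₁ := Subgroup.exists_isComplement_left κ₁.range 1
  let c₂ := Subgroup.exists_isComplement_left κ₂.range 1
  { I₁ := c₁.choose
    I₂ := c₂.choose
    one₁ := c₁.choose_spec.2
    one₂ := c₂.choose_spec.2
    rep₁ := c₁.choose_spec.1.existsUnique_mul_map
    rep₂ := c₂.choose_spec.1.existsUnique_mul_map }

variable {κ₁ : G₀ →* H₁} {κ₂ : G₀ →* H₂} (x : AmalgTry G₀ H₁ H₂ κ₁ κ₂)

def base : x.U := ⟨(1, 1, 1), x.one₁, x.one₂⟩

theorem j₁_mul_eq (g : H₁) (u : x.U) :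
    (x.j₁ g u).val.2.1 * κ₁ (x.j₁ g u).val.1 = u.val.2.1 * κ₁ u.val.1 * g :=
  ((x.rep₁ _).exists.choose_spec.2.choose_spec).symm

theorem j₂_mul_eq (g : H₂) (u : x.U) :
    (x.j₂ g u).val.2.2 * κ₂ (x.j₂ g u).val.1 = u.val.2.2 * κ₂ u.val.1 * g :=
  ((x.rep₂ _).exists.choose_spec.2.choose_spec).symm

theorem j₁_base_mul_eq (g : H₁) :
    (x.j₁ g x.base).val.2.1 * κ₁ (x.j₁ g x.base).val.1 = g := by
  simpa [base] using x.j₁_mul_eq g x.base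

theorem j₂_base_mul_eq (g : H₂) :
    (x.j₂ g x.base).val.2.2 * κ₂ (x.j₂ g x.base).val.1 = g := by
  simpa [base] using x.j₂_mul_eq g x.base

theorem exists_eq_of_j₁_base_eq_j₂_base {g₁ : H₁} {g₂ : H₂}
    (h : x.j₁ g₁ x.base = x.j₂ g₂ x.base) : ∃ g₀ : G₀, g₁ = κ₁ g₀ ∧ g₂ = κ₂ g₀ := by
  have hg₁ := x.j₁_base_mul_eq g₁
  have hg₂ := x.j₂_base_mul_eq g₂
  have hrep₁ : (x.j₁ g₁ x.base).val.2.1 = 1 := by rw [h]; rfl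
  have hrep₂ : (x.j₂ g₂ x.base).val.2.2 = 1 := by rw [← h]; rfl
  rw [hrep₁, one_mul] at hg₁
  rw [hrep₂, one_mul, ← h] at hg₂
  exact ⟨_, hg₁.symm, hg₂.symm⟩

end AmalgTry

theorem CompatAt.exists_eq_of_map_eq {G₀ G₁ G₂ G₃ H₁ H₂ : Type u}
    [Group G₀] [Group G₁] [Group G₂] [Group G₃] [Group H₁] [Group H₂]
    {ι₁ : G₀ →* G₁} {ι₂ : G₀ →* G₂} {e₁ : G₁ →* G₃} {e₂ : G₂ →* G₃}
    {f₁ : G₁ →* H₁} {f₂ : G₂ →* H₂} {x : AmalgTry G₀ H₁ H₂ (f₁.comp ι₁) (f₂.comp ι₂)}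
    {F : G₃ → (x.U → x.U)} (hF : CompatAt ι₁ ι₂ e₁ e₂ f₁ f₂ x F) {a : G₁} {b : G₂}
    (hab : e₁ a = e₂ b) : ∃ g₀ : G₀, f₁ a = f₁ (ι₁ g₀) ∧ f₂ b = f₂ (ι₂ g₀) := by
  obtain ⟨-, -, hF₁, hF₂⟩ := hF
  refine x.exists_eq_of_j₁_base_eq_j₂_base ?_
  rw [← hF₁, ← hF₂, hab]

theorem stmt15_general {G₀ G₁ G₂ G₃ : Type u}
    [Group G₀] [Group G₁] [Group G₂] [Group G₃]
    [Finite G₁] [Finite G₂]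
    (ι₁ : G₀ →* G₁) (ι₂ : G₀ →* G₂) (e₁ : G₁ →* G₃) (e₂ : G₂ →* G₃)
    (h : NFfin G₀ G₁ G₂ G₃ ι₁ ι₂ e₁ e₂) :
    ∀ (x : G₁) (y : G₂), e₁ x = e₂ y →
      ∃ g₀ : G₀, x = ι₁ g₀ ∧ y = ι₂ g₀ := by
  intro x y hxy
  obtain ⟨-, -, -, -, -, -, hcompat, -⟩ := h
  obtain ⟨F, hF⟩ := hcompat G₁ G₂ (MonoidHom.id G₁) (MonoidHom.id G₂)
    Function.injective_id Function.injective_id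
    (.of_finite G₁) (.of_finite G₂) (.ofComplements _ _)
  exact hF.exists_eq_of_map_eq hxy

/-- In the canonical stable amalgam `NF_fin(G₀,G₁,G₂,G₃)` of finite groups,
the factors intersect in the base: if `e₁ x = e₂ y` inside `G₃` then `x` and
`y` come from a common element of `G₀`. -/
theorem stmt15 {G₀ G₁ G₂ G₃ : Type u}
    [Group G₀] [Group G₁] [Group G₂] [Group G₃]
    [Finite G₀] [Finite G₁] [Finite G₂] [Finite G₃]
    (ι₁ : G₀ →* G₁) (ι₂ : G₀ →* G₂) (e₁ : G₁ →* G₃) (e₂ : G₂ →* G₃)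
    (h : NFfin G₀ G₁ G₂ G₃ ι₁ ι₂ e₁ e₂) :
    ∀ (x : G₁) (y : G₂), e₁ x = e₂ y →
      ∃ g₀ : G₀, x = ι₁ g₀ ∧ y = ι₂ g₀ :=
  stmt15_general ι₁ ι₂ e₁ e₂ h
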